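/- Let d ≥ 2, let y₁, …, yₙ ∈ ℝ^d be mutually distinct with cⱼ ∈ ℂ \ {0}, and similarly ỹ₁, …, ỹₘ mutually distinct with c̃ⱼ ∈ ℂ \ {0}. If Σⱼ cⱼ·exp(i·yⱼ·θ) = Σⱼ c̃ⱼ·exp(i·ỹⱼ·θ) for all θ ∈ S^{d-1}, then n = m and the finite sets of pairs {(yⱼ, cⱼ)} and {(ỹⱼ, c̃ⱼ)} coincide. -/

import Mathlib

/-!
Distinct plane waves `θ ↦ exp (i ⟪z, θ⟫)` are linearly independent on the unit sphere when
`dim ≥ 2`, which gives the uniqueness at once. For independence, choose a unit vector `v`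
separating the finitely many nodes by `⟪z, v⟫` and a unit `u ⟂ v`; on the great circle
`cos t • u + sin t • v` the relation becomes an identity between entire functions of `t`, so it
persists on the imaginary axis. There, suitably parametrised by `r`, the term of node `z` has
modulus `exp (⟪z, v⟫ r)`, and letting `r → ∞` forces the coefficient of the largest `⟪z, v⟫`
to vanish.
-/

open scoped RealInnerProductSpace
open Complex Filter Function Set Topology Module

theorem Differentiable.eq_zero_of_forall_ofReal_eq_zero {F : Type*} [NormedAddCommGroup F]
    [NormedSpace ℂ F] [CompleteSpace F] {f : ℂ → F} (hf : Differentiable ℂ f)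
    (h : ∀ x : ℝ, f x = 0) : f = 0 := by
  have hreal : Tendsto ((↑) : ℝ → ℂ) (𝓝[≠] 0) (𝓝[≠] 0) :=
    continuous_ofReal.continuousWithinAt.tendsto_nhdsWithin fun x hx => by simpa using hx
  exact AnalyticOnNhd.eq_of_frequently_eq (fun z _ => hf.analyticAt z) analyticOnNhd_const
    (hreal.frequently (Frequently.of_forall h))

theorem forall_eq_zero_of_sum_mul_eq_zero_of_norm_eq_exp {ι 𝕜 : Type*} [NormedField 𝕜]
    {s : Finset ι} {β : ι → ℝ} (hβ : InjOn β s) {a : ι → 𝕜} {e : ℝ → ι → 𝕜}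
    (he : ∀ r i, ‖e r i‖ = Real.exp (β i * r)) (h : ∀ r, ∑ i ∈ s, a i * e r i = 0) :
    ∀ i ∈ s, a i = 0 := by
  classical
  by_contra! ⟨j, hjs, hj⟩
  set S := s.filter (a · ≠ 0)
  obtain ⟨i₀, hi₀S, hmax⟩ := S.exists_max_image β ⟨j, Finset.mem_filter.2 ⟨hjs, hj⟩⟩
  obtain ⟨hi₀s, hi₀⟩ := Finset.mem_filter.1 hi₀S
  have hbound : ∀ r, ‖a i₀‖ ≤ ∑ i ∈ S.erase i₀, ‖a i‖ * Real.exp ((β i - β i₀) * r) := by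
    intro r
    have hS : a i₀ * e r i₀ + ∑ i ∈ S.erase i₀, a i * e r i = 0 := by
      rw [Finset.add_sum_erase S (fun i => a i * e r i) hi₀S]
      exact (Finset.sum_filter_of_ne fun i _ hi => left_ne_zero_of_mul hi).trans (h r)
    calc ‖a i₀‖ = ‖a i₀ * e r i₀‖ / Real.exp (β i₀ * r) := by
          rw [norm_mul, he, mul_div_cancel_right₀ _ (Real.exp_pos _).ne']
      _ ≤ (∑ i ∈ S.erase i₀, ‖a i‖ * Real.exp (β i * r)) / Real.exp (β i₀ * r) := by
          rw [eq_neg_of_add_eq_zero_left hS, norm_neg]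
          gcongr
          exact (norm_sum_le _ _).trans_eq (by simp only [norm_mul, he])
      _ = ∑ i ∈ S.erase i₀, ‖a i‖ * Real.exp ((β i - β i₀) * r) := by
          simp only [Finset.sum_div, mul_div_assoc, ← Real.exp_sub, sub_mul]
  have hlim : Tendsto (fun r => ∑ i ∈ S.erase i₀, ‖a i‖ * Real.exp ((β i - β i₀) * r))
      atTop (𝓝 0) := by
    rw [← Finset.sum_const_zero]
    refine tendsto_finsetSum _ fun i hi => ?_
    have hlt : β i - β i₀ < 0 := by
      obtain ⟨hne, hiS⟩ := Finset.mem_erase.1 hi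
      exact sub_neg.2 ((hmax i hiS).lt_of_ne fun heq => hne
        (hβ (Finset.mem_filter.1 hiS).1 hi₀s heq))
    simpa using (Real.tendsto_exp_atBot.comp
      (tendsto_id.const_mul_atTop_of_neg hlt)).const_mul ‖a i‖
  exact hi₀ (norm_le_zero_iff.1 (ge_of_tendsto' hlim hbound))

theorem forall_eq_zero_of_sum_exp_cos_sin_eq_zero {ι : Type*} {s : Finset ι} {α β : ι → ℝ}
    (hβ : InjOn β s) {a : ι → ℂ}
    (h : ∀ t : ℝ, ∑ i ∈ s, a i * cexp (I * (α i * Real.cos t + β i * Real.sin t)) = 0) :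
    ∀ i ∈ s, a i = 0 := by
  set g : ℂ → ℂ := fun t => ∑ i ∈ s, a i * cexp (I * (α i * cos t + β i * sin t))
  have hg : g = 0 := by
    refine Differentiable.eq_zero_of_forall_ofReal_eq_zero (by fun_prop) fun t => ?_
    simpa [g, ← ofReal_cos, ← ofReal_sin] using h t
  -- On the imaginary axis, at `t = arsinh (-r) * I`, the `i`-th term has modulus `exp (β i * r)`.
  refine forall_eq_zero_of_sum_mul_eq_zero_of_norm_eq_exp hβ
    (e := fun r i =>
      cexp (I * (α i * cos (Real.arsinh (-r) * I) + β i * sin (Real.arsinh (-r) * I))))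
    (fun r i => ?_) (fun r => congrFun hg _)
  rw [norm_exp, cos_mul_I, sin_mul_I, ← ofReal_cosh, ← ofReal_sinh, Real.sinh_arsinh]
  simp

section InnerProductSpace

variable {E : Type*} [NormedAddCommGroup E] [InnerProductSpace ℝ E]

theorem exists_injOn_inner (s : Finset E) : ∃ v : E, InjOn (⟪·, v⟫) s := by
  obtain ⟨v, hv⟩ := Module.Dual.exists_forall_ne_zero_of_forall_exists
    (fun p : {p : s × s // p.1 ≠ p.2} => innerₛₗ ℝ ((p.1.1 : E) - p.1.2))
    fun p => ⟨(p.1.1 : E) - p.1.2, by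
      rw [innerₛₗ_apply_apply]
      exact inner_self_ne_zero.2 (sub_ne_zero.2 (Subtype.coe_injective.ne p.2))⟩
  refine ⟨v, fun x hx y hy hxy => by_contra fun hne => hv ⟨(⟨x, hx⟩, ⟨y, hy⟩), ?_⟩ ?_⟩
  · simpa using hne
  · simpa [inner_sub_left, sub_eq_zero] using hxy

theorem exists_norm_eq_one_injOn_inner [Nontrivial E] (s : Finset E) :
    ∃ v : E, ‖v‖ = 1 ∧ InjOn (⟪·, v⟫) s := by
  obtain ⟨v, hv⟩ := exists_injOn_inner s
  rcases eq_or_ne v 0 with rfl | hv0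
  · obtain ⟨w, hw⟩ := exists_norm_eq E zero_le_one
    refine ⟨w, hw, fun x hx y hy _ => hv hx hy ?_⟩
    simp
  · refine ⟨‖v‖⁻¹ • v, norm_smul_inv_norm hv0, fun x hx y hy hxy => hv hx hy ?_⟩
    simpa [inner_smul_right, hv0] using hxy

theorem exists_norm_eq_one_inner_eq_zero [FiniteDimensional ℝ E] (hE : 2 ≤ finrank ℝ E) (v : E) :
    ∃ u : E, ‖u‖ = 1 ∧ ⟪u, v⟫ = 0 := by
  have hdim := (ℝ ∙ v).finrank_add_finrank_orthogonal
  have : 0 < finrank ℝ (ℝ ∙ v)ᗮ := by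
    have : finrank ℝ (ℝ ∙ v) ≤ 1 := (finrank_span_le_card {v}).trans (by simp)
    omega
  have := Module.nontrivial_of_finrank_pos this
  obtain ⟨u, hu⟩ := exists_norm_eq (ℝ ∙ v)ᗮ zero_le_one
  exact ⟨u, hu, Submodule.mem_orthogonal_singleton_iff_inner_left.1 u.2⟩

theorem norm_cos_smul_add_sin_smul {u v : E} (hu : ‖u‖ = 1) (hv : ‖v‖ = 1) (huv : ⟪u, v⟫ = 0)
    (t : ℝ) : ‖Real.cos t • u + Real.sin t • v‖ = 1 := by
  rw [← pow_left_inj₀ (norm_nonneg _) zero_le_one two_ne_zero, norm_add_sq_real, norm_smul,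
    norm_smul, inner_smul_left, inner_smul_right, huv, hu, hv]
  simp [Real.cos_sq_add_sin_sq]

theorem linearIndependent_exp_inner_sphere [FiniteDimensional ℝ E] (hE : 2 ≤ finrank ℝ E) :
    LinearIndependent ℂ (fun (z : E) (θ : Metric.sphere (0 : E) 1) => cexp (I * ⟪z, θ⟫)) := by
  have : Nontrivial E := Module.nontrivial_of_finrank_pos (R := ℝ) (by omega)
  refine linearIndependent_iff'.2 fun s a hsum => ?_
  obtain ⟨v, hv, hinj⟩ := exists_norm_eq_one_injOn_inner s
  obtain ⟨u, hu, huv⟩ := exists_norm_eq_one_inner_eq_zero hE v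
  refine forall_eq_zero_of_sum_exp_cos_sin_eq_zero hinj (α := (⟪·, u⟫)) fun t => ?_
  have := congrFun hsum ⟨Real.cos t • u + Real.sin t • v, by
    simpa using norm_cos_smul_add_sin_smul hu hv huv t⟩
  simpa [inner_add_right, inner_smul_right, mul_comm] using this

end InnerProductSpace

namespace Finsupp

variable {κ α M : Type*} [Fintype κ] [AddCommMonoid M] {y : κ → α} {c : κ → M}

theorem card_support_mapDomain_equivFunOnFinite_symm [DecidableEq α] (hy : Injective y)
    (hc : ∀ j, c j ≠ 0) :
    (mapDomain y (equivFunOnFinite.symm c)).support.card = Fintype.card κ := by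
  rw [mapDomain_support_of_injective hy, Finset.card_image_of_injective _ hy,
    Finset.eq_univ_of_forall (s := (equivFunOnFinite.symm c).support) fun j => by simpa using hc j,
    Finset.card_univ]

theorem range_eq_image_support_mapDomain_equivFunOnFinite_symm (hy : Injective y)
    (hc : ∀ j, c j ≠ 0) :
    range (fun j => (y j, c j)) =
      (fun x => (x, mapDomain y (equivFunOnFinite.symm c) x)) ''
        (mapDomain y (equivFunOnFinite.symm c)).support := by
  classical
  rw [mapDomain_support_of_injective hy]
  ext p
  simp [hy, hc]

theorem linearCombination_mapDomain_equivFunOnFinite_symm {ι R N : Type*} [Semiring R]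
    [AddCommMonoid N] [Module R N] (v : ι → N) (y : κ → ι) (c : κ → R) :
    linearCombination R v (mapDomain y (equivFunOnFinite.symm c)) = ∑ j, c j • v (y j) := by
  rw [linearCombination_mapDomain, linearCombination_apply,
    sum_fintype _ _ fun i => zero_smul R ((v ∘ y) i)]
  simp

end Finsupp

theorem LinearIndependent.card_eq_and_range_eq_of_sum_smul_eq {ι κ κ' R M : Type*} [Semiring R]
    [AddCommMonoid M] [Module R M] [Fintype κ] [Fintype κ'] {v : ι → M}
    (hv : LinearIndependent R v) {y : κ → ι} (hy : Injective y) {c : κ → R} (hc : ∀ j, c j ≠ 0)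
    {y' : κ' → ι} (hy' : Injective y') {c' : κ' → R} (hc' : ∀ j, c' j ≠ 0)
    (h : ∑ j, c j • v (y j) = ∑ j, c' j • v (y' j)) :
    Fintype.card κ = Fintype.card κ' ∧
      range (fun j => (y j, c j)) = range (fun j => (y' j, c' j)) := by
  classical
  have hl : Finsupp.mapDomain y (Finsupp.equivFunOnFinite.symm c) =
      Finsupp.mapDomain y' (Finsupp.equivFunOnFinite.symm c') :=
    hv.finsuppLinearCombination_injective <| by
      simpa only [Finsupp.linearCombination_mapDomain_equivFunOnFinite_symm] using h
  constructor
  · rw [← Finsupp.card_support_mapDomain_equivFunOnFinite_symm hy hc,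
      ← Finsupp.card_support_mapDomain_equivFunOnFinite_symm hy' hc', hl]
  · rw [Finsupp.range_eq_image_support_mapDomain_equivFunOnFinite_symm hy hc,
      Finsupp.range_eq_image_support_mapDomain_equivFunOnFinite_symm hy' hc', hl]

/-- Proposition 1: global uniqueness of a multipoint source from its far-field pattern on the
full unit sphere: equal sums of exponentials with distinct nodes and nonzero coefficients
have the same number of terms and the same set of (node, coefficient) pairs. -/
theorem stmt3 (d n m : ℕ) (hd : 2 ≤ d)
    (y : Fin n → EuclideanSpace ℝ (Fin d)) (hy : Function.Injective y)
    (c : Fin n → ℂ) (hc : ∀ j, c j ≠ 0)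
    (y' : Fin m → EuclideanSpace ℝ (Fin d)) (hy' : Function.Injective y')
    (c' : Fin m → ℂ) (hc' : ∀ j, c' j ≠ 0)
    (h : ∀ θ : EuclideanSpace ℝ (Fin d), ‖θ‖ = 1 →
      ∑ j, c j * Complex.exp (Complex.I * (⟪y j, θ⟫ : ℝ)) =
      ∑ j, c' j * Complex.exp (Complex.I * (⟪y' j, θ⟫ : ℝ))) :
    n = m ∧ Set.range (fun j => (y j, c j)) = Set.range (fun j => (y' j, c' j)) := by
  have hli := linearIndependent_exp_inner_sphere (E := EuclideanSpace ℝ (Fin d)) (by simpa using hd)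
  simpa using hli.card_eq_and_range_eq_of_sum_smul_eq hy hc hy' hc' <| funext fun θ => by
    simpa using h θ (norm_eq_of_mem_sphere θ)
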